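/- arXiv:2107.05514 — 3 statements merged into one kernel-verified Lean document; each statement's English description precedes it below -/
import Mathlib

section
/- Let S be a commutative ring and F(x,y) = a x^4 + b x^3 y + c x^2 y^2 + d x y^3 + e y^4 a binary quartic form over S. Define the ternary quadratic forms q_A(x,y,z) = xz - y^2 and q_B(x,y,z) = a x^2 + b xy + c y^2 + d yz + e z^2 (arising from the pair (A_1, B_F)), and the ternary sextic form f(x,y,z) = 4·det(A_1·q_B(x,y,z) - B_F·q_A(x,y,z)) where A_1 and B_F are the symmetric 3×3 matrices of q_A and q_B (with half-integer off-diagonal entries interpreted after clearing denominators, so that f has coefficients in S). Then f(x^2, xy, y^2) = F(x,y)^3 as polynomials in S[x,y]. -/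
/-- Fess's identity (Theorem 3.3). For a binary quartic form
`F(x,y) = a x^4 + b x^3 y + c x^2 y^2 + d x y^3 + e y^4` over a commutative ring `S`,
with `q_A(x,y,z) = xz - y^2`, `q_B(x,y,z) = a x^2 + b xy + c y^2 + d yz + e z^2`, and
`f = 4 ⬝ det(A₁ ⬝ q_B - B_F ⬝ q_A)` (whose coefficients lie in `S`; this is certified by
the identity `2 ⬝ f = det(2 A₁ ⬝ q_B - 2 B_F ⬝ q_A)`, the right-hand matrix having
entries in `S`), we have `f(x², xy, y²) = F(x,y)³`. -/
theorem fess_identity (S : Type*) [CommRing S] (a b c d e : S)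
    (F : S → S → S) (hF : ∀ x y, F x y = a*x^4 + b*x^3*y + c*x^2*y^2 + d*x*y^3 + e*y^4)
    (qA : S → S → S → S) (hqA : ∀ x y z, qA x y z = x*z - y^2)
    (qB : S → S → S → S) (hqB : ∀ x y z, qB x y z = a*x^2 + b*x*y + c*y^2 + d*y*z + e*z^2)
    (f : S → S → S → S)
    (hf : ∀ x y z, f x y z =
      (qB x y z)^3 + c*(qB x y z)^2*(qA x y z) + (b*d - 4*a*e)*(qB x y z)*(qA x y z)^2
        + (a*d^2 + b^2*e - 4*a*c*e)*(qA x y z)^3) :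
    (∀ x y z : S, 2 * f x y z =
      Matrix.det !![-(2*a) * qA x y z, -b * qA x y z, qB x y z;
                    -b * qA x y z, -(2 * qB x y z) - 2*c * qA x y z, -d * qA x y z;
                    qB x y z, -d * qA x y z, -(2*e) * qA x y z]) ∧
    (∀ x y : S, f (x^2) (x*y) (y^2) = (F x y)^3) := by
  constructor
  · intro x y z
    rw [Matrix.det_fin_three, hf]
    simp [Matrix.cons_val_zero, Matrix.cons_val_one]
    ring
  · intro x y
    rw [hf, hF, hqA, hqB]
    ring
end

section
/- Let F(x,y) be a binary quartic form over ℤ_p, and let f(x,y,z) = 4·det(A_1·q_B(x,y,z) − B_F·q_A(x,y,z)) be the associated ternary sextic form as in Fess's identity. If there exist a, b ∈ ℤ_p and c ∈ ℤ_p^× with F(a,b) = c^2, then there exist X, Y, Z ∈ ℤ_p with f(X,Y,Z) = 1. -/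
/-- If the binary quartic form `F` over `ℤ_p` represents the square of a unit, then the
associated ternary sextic index form `f = 4 ⬝ det(A₁ ⬝ q_B − B_F ⬝ q_A)` represents `1`. -/
theorem index_form_represents_one_of_F_represents_unit_square
    (p : ℕ) [Fact p.Prime] (a0 a1 a2 a3 a4 : ℤ_[p])
    (F : ℤ_[p] → ℤ_[p] → ℤ_[p])
    (hF : ∀ x y, F x y = a0*x^4 + a1*x^3*y + a2*x^2*y^2 + a3*x*y^3 + a4*y^4)
    (qA : ℤ_[p] → ℤ_[p] → ℤ_[p] → ℤ_[p]) (hqA : ∀ x y z, qA x y z = x*z - y^2)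
    (qB : ℤ_[p] → ℤ_[p] → ℤ_[p] → ℤ_[p])
    (hqB : ∀ x y z, qB x y z = a0*x^2 + a1*x*y + a2*y^2 + a3*y*z + a4*z^2)
    (f : ℤ_[p] → ℤ_[p] → ℤ_[p] → ℤ_[p])
    (hf : ∀ x y z, f x y z =
      (qB x y z)^3 + a2*(qB x y z)^2*(qA x y z)
        + (a1*a3 - 4*a0*a4)*(qB x y z)*(qA x y z)^2
        + (a0*a3^2 + a1^2*a4 - 4*a0*a2*a4)*(qA x y z)^3)
    (a b c : ℤ_[p]) (hc : IsUnit c) (hFab : F a b = c^2) :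
    ∃ X Y Z : ℤ_[p], f X Y Z = 1 := by
  obtain ⟨u, rfl⟩ := hc
  set d : ℤ_[p] := ((u⁻¹ : ℤ_[p]ˣ) : ℤ_[p]) with hd
  have hdu : d * (u : ℤ_[p]) = 1 := by
    rw [hd, ← Units.val_mul, inv_mul_cancel, Units.val_one]
  refine ⟨d * a^2, d * (a*b), d * b^2, ?_⟩
  have hFab' : a0*a^4 + a1*a^3*b + a2*a^2*b^2 + a3*a*b^3 + a4*b^4 = (u:ℤ_[p])^2 := by
    rw [← hF]; exact hFab
  rw [hf, hqA, hqB]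
  set S : ℤ_[p] := a0*a^4 + a1*a^3*b + a2*a^2*b^2 + a3*a*b^3 + a4*b^4
  linear_combination d^6*(S^2 + S*(u:ℤ_[p])^2 + (u:ℤ_[p])^4)*hFab' +
    ((d*(u:ℤ_[p]))^5 + (d*(u:ℤ_[p]))^4 + (d*(u:ℤ_[p]))^3 + (d*(u:ℤ_[p]))^2 + d*(u:ℤ_[p]) + 1)*hdu
end

section
/- Let p be an odd prime and F ∈ 𝔽_p[x,y] a binary quartic form of the shape F = L_0^2 · Q, where L_0 is a nonzero linear form and Q is an irreducible quadratic form over 𝔽_p (i.e., Q has no root in ℙ^1(𝔽_p)). Then there exist x, y, z ∈ 𝔽_p with z ≠ 0 and z^2 = F(x,y). -/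
open Polynomial

/-- Auxiliary: an anisotropic binary quadratic form represents a nonzero square on the
affine line `a0*x + b0*y = 1` (with `b0 ≠ 0`). -/
lemma aux_quadratic_square (p : ℕ) [Fact p.Prime] (hp : p ≠ 2)
    (A B C : ZMod p)
    (hirr : ∀ x y : ZMod p, (x, y) ≠ (0, 0) → A*x^2 + B*x*y + C*y^2 ≠ 0)
    (a0 b0 : ZMod p) (hb : b0 ≠ 0) :
    ∃ x y z : ZMod p, a0*x + b0*y = 1 ∧ z ≠ 0 ∧ z^2 = A*x^2 + B*x*y + C*y^2 := by
  set b : ZMod p := b0⁻¹ with hbdef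
  have hbb : b0 * b = 1 := mul_inv_cancel₀ hb
  set A' : ZMod p := A - B*b*a0 + C*b^2*a0^2 with hA'
  set B' : ZMod p := B*b - 2*C*b^2*a0 with hB'
  set C' : ZMod p := C*b^2 with hC'
  have hA'ne : A' ≠ 0 := by
    have := hirr 1 (-(b*a0)) (by simp)
    intro h
    apply this
    rw [hA'] at h
    linear_combination h
  have hcard : Fintype.card (ZMod p) % 2 = 1 := by
    rw [ZMod.card]
    exact Nat.odd_iff.mp ((Fact.out : p.Prime).odd_of_ne_two hp)
  obtain ⟨z, x, hzx⟩ := FiniteField.exists_root_sum_quadratic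
    (f := (X^2 : (ZMod p)[X])) (g := -(Polynomial.C A' * X^2 + Polynomial.C B' * X + Polynomial.C C'))
    (Polynomial.degree_X_pow 2)
    (by rw [Polynomial.degree_neg]; exact Polynomial.degree_quadratic hA'ne)
    hcard
  simp only [eval_pow, eval_X, eval_neg, eval_add, eval_mul, eval_C] at hzx
  have hz2 : z^2 = A'*x^2 + B'*x + C' := by linear_combination hzx
  refine ⟨x, b*(1 - a0*x), z, ?_, ?_, ?_⟩
  · ring_nf
    linear_combination (1 - a0*x) * hbb
  · intro hz0
    apply hirr x (b*(1 - a0*x))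
    · intro hxy
      have hx0 : x = 0 := (Prod.mk.injEq _ _ _ _ ▸ hxy).1
      have hy0 : b*(1 - a0*x) = 0 := (Prod.mk.injEq _ _ _ _ ▸ hxy).2
      rw [hx0, mul_zero, sub_zero, mul_one] at hy0
      exact hb (by simpa [hbdef, inv_eq_zero] using hy0)
    · rw [hz0] at hz2
      linear_combination -hz2
  · rw [hz2, hA', hB', hC']
    ring

/-- Lemma 3.7, splitting type `(1²2)`: for `p` odd, a binary quartic form `F = L₀² ⬝ Q`
over `𝔽_p` with `L₀` a nonzero linear form and `Q` an irreducible binary quadratic form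
represents a nonzero square. -/
theorem quartic_type_1sq_2_represents_nonzero_square
    (p : ℕ) [Fact p.Prime] (hp : p ≠ 2)
    (a0 b0 : ZMod p) (hL0 : a0 ≠ 0 ∨ b0 ≠ 0)
    (A B C : ZMod p)
    (Q : ZMod p → ZMod p → ZMod p) (hQ : ∀ x y, Q x y = A*x^2 + B*x*y + C*y^2)
    (hirr : ∀ x y : ZMod p, (x, y) ≠ (0, 0) → Q x y ≠ 0)
    (F : ZMod p → ZMod p → ZMod p)
    (hF : ∀ x y, F x y = (a0*x + b0*y)^2 * Q x y) :
    ∃ x y z : ZMod p, z ≠ 0 ∧ z^2 = F x y := by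
  have hirr' : ∀ x y : ZMod p, (x, y) ≠ (0, 0) → A*x^2 + B*x*y + C*y^2 ≠ 0 := by
    intro x y h
    rw [← hQ]; exact hirr x y h
  rcases eq_or_ne b0 0 with hb0 | hb0
  · -- then a0 ≠ 0; swap the variables
    have ha0 : a0 ≠ 0 := hL0.resolve_right (by simp [hb0])
    have hirr'' : ∀ x y : ZMod p, (x, y) ≠ (0, 0) → C*x^2 + B*x*y + A*y^2 ≠ 0 := by
      intro x y h hcon
      apply hirr' y x (by simpa [Prod.ext_iff, and_comm] using h)
      linear_combination hcon
    obtain ⟨x, y, z, hline, hz, hz2⟩ :=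
      aux_quadratic_square p hp C B A hirr'' b0 a0 ha0
    refine ⟨y, x, z, hz, ?_⟩
    rw [hF, hQ, ]
    have : a0*y + b0*x = 1 := by linear_combination hline
    rw [this]
    linear_combination hz2
  · obtain ⟨x, y, z, hline, hz, hz2⟩ :=
      aux_quadratic_square p hp A B C hirr' a0 b0 hb0
    refine ⟨x, y, z, hz, ?_⟩
    rw [hF, hQ, hline]
    linear_combination hz2
end
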